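/- For every integer N ≥ 2 there exists a constant c(N) > 0 such that for all θ > 0 and all real x, y: |xy| ≤ (c(N)/θ)·( (1+|x|)·(ln(1+|x|))^{N−1} + e^{|θy|^{1/(N−1)}} − 1 ). -/
import Mathlib

open Real

theorem stmt_1 (N : ℕ) (hN : 2 ≤ N) :
    ∃ c : ℝ, 0 < c ∧ ∀ θ : ℝ, 0 < θ → ∀ x y : ℝ,
      |x * y| ≤ (c / θ) *
        ((1 + |x|) * (Real.log (1 + |x|)) ^ (N - 1)
          + Real.exp (|θ * y| ^ ((1 : ℝ) / (N - 1))) - 1) := by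
  obtain ⟨m, rfl⟩ : ∃ m, N = m + 1 := ⟨N - 1, by omega⟩
  have hm1 : 1 ≤ m := by omega
  set C : ℝ := 3 * 2 ^ m * m.factorial with hC
  have hfac1 : (1 : ℝ) ≤ m.factorial := by exact_mod_cast m.factorial_pos
  have hpow1 : (1 : ℝ) ≤ 2 ^ m := one_le_pow₀ (by norm_num)
  have hC0 : 0 < C := by positivity
  refine ⟨C, hC0, ?_⟩
  intro θ hθ x y
  have hNm : m + 1 - 1 = m := by omega
  have hcast : ((m : ℝ) + 1) - 1 = (m : ℝ) := by ring
  rw [hNm]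
  push_cast
  rw [hcast]
  -- key inequality
  have key : ∀ u v : ℝ, 0 ≤ u → 0 ≤ v →
      u * v ≤ C * ((1 + u) * (Real.log (1 + u)) ^ m + Real.exp (v ^ ((1 : ℝ) / m)) - 1) := by
    intro u v hu hv
    set L := Real.log (1 + u) with hL
    have hL0 : 0 ≤ L := Real.log_nonneg (by linarith)
    set t := v ^ ((1 : ℝ) / m) with ht
    have ht0 : 0 ≤ t := Real.rpow_nonneg hv _
    have hmne : (m : ℝ) ≠ 0 := by positivity
    have htm : t ^ m = v := by
      rw [ht, ← Real.rpow_natCast (v ^ ((1:ℝ)/m)) m, ← Real.rpow_mul hv,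
        one_div_mul_cancel hmne, Real.rpow_one]
    have hexpt : (1 : ℝ) ≤ Real.exp t := Real.one_le_exp ht0
    set A := (1 + u) * L ^ m with hA
    have hA0 : 0 ≤ A := by positivity
    have hE0 : 0 ≤ Real.exp t - 1 := by linarith
    -- reduce to: u*v ≤ C * X with X ∈ {A, exp t - 1}
    have finishA : u * v ≤ C * A → u * v ≤ C * (A + Real.exp t - 1) := by
      intro h
      have : C * A ≤ C * (A + (Real.exp t - 1)) :=
        mul_le_mul_of_nonneg_left (by linarith) hC0.le
      calc u * v ≤ C * A := h
        _ ≤ C * (A + (Real.exp t - 1)) := this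
        _ = C * (A + Real.exp t - 1) := by ring
    have finishE : u * v ≤ C * (Real.exp t - 1) → u * v ≤ C * (A + Real.exp t - 1) := by
      intro h
      have : C * (Real.exp t - 1) ≤ C * (A + (Real.exp t - 1)) :=
        mul_le_mul_of_nonneg_left (by linarith) hC0.le
      calc u * v ≤ C * (Real.exp t - 1) := h
        _ ≤ C * (A + (Real.exp t - 1)) := this
        _ = C * (A + Real.exp t - 1) := by ring
    rcases le_or_gt t (2 * L) with hcase | hcase
    · -- t ≤ 2L : uv ≤ 2^m (1+u) L^m ≤ C·A
      apply finishA
      have h2 : u * v ≤ (1 + u) * (2 * L) ^ m := by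
        rw [← htm]
        exact mul_le_mul (by linarith) (pow_le_pow_left₀ ht0 hcase m) (by positivity)
          (by linarith)
      have h3 : (1 + u) * (2 * L) ^ m = 2 ^ m * A := by rw [hA]; ring
      have h4 : 2 ^ m * A ≤ C * A := by
        apply mul_le_mul_of_nonneg_right _ hA0
        nlinarith
      linarith [h2, h3 ▸ h2]
    · -- 2L < t
      apply finishE
      have h1u : 1 + u ≤ Real.exp (t / 2) := by
        have e1 : 1 + u = Real.exp L := by rw [hL, Real.exp_log (by linarith)]
        rw [e1]; exact Real.exp_le_exp.2 (by linarith)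
      have huv : u * v ≤ Real.exp (t / 2) * t ^ m := by
        rw [← htm] at hv ⊢
        exact mul_le_mul (by linarith) le_rfl hv (Real.exp_pos _).le
      rcases le_or_gt t 1 with hts | hts
      · -- small t
        have htm_le : t ^ m ≤ t := by
          calc t ^ m ≤ t ^ 1 := pow_le_pow_of_le_one ht0 hts hm1
            _ = t := pow_one t
        have he : Real.exp (t / 2) ≤ 2 := by
          have h1 : Real.exp (t / 2) ≤ Real.exp (1 / 2) := Real.exp_le_exp.2 (by linarith)
          have h2 : Real.exp (1 / 2) * Real.exp (1 / 2) = Real.exp 1 := by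
            rw [← Real.exp_add]; norm_num
          have h3 := Real.exp_one_lt_d9
          have h4 := Real.exp_pos (1 / 2 : ℝ)
          nlinarith
        have h2 : u * v ≤ 2 * t := by
          calc u * v ≤ Real.exp (t / 2) * t ^ m := huv
            _ ≤ 2 * t := mul_le_mul he htm_le (by positivity) (by norm_num)
        have h3 : t ≤ Real.exp t - 1 := by linarith [Real.add_one_le_exp t]
        have h4 : 2 * t ≤ 2 * (Real.exp t - 1) := by linarith
        have h5 : 2 * (Real.exp t - 1) ≤ C * (Real.exp t - 1) := by
          apply mul_le_mul_of_nonneg_right _ hE0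
          nlinarith
        linarith
      · -- t ≥ 1
        have hpf : t ^ m ≤ 2 ^ m * m.factorial * Real.exp (t / 2) := by
          have h := Real.pow_div_factorial_le_exp (t / 2) (by positivity) m
          rw [div_pow, div_div] at h
          have hpos : (0 : ℝ) < 2 ^ m * m.factorial := by positivity
          calc t ^ m = 2 ^ m * m.factorial * (t ^ m / (2 ^ m * m.factorial)) := by
                field_simp
            _ ≤ 2 ^ m * m.factorial * Real.exp (t / 2) :=
                mul_le_mul_of_nonneg_left h hpos.le
        have huv2 : u * v ≤ 2 ^ m * m.factorial * Real.exp t := by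
          calc u * v ≤ Real.exp (t / 2) * t ^ m := huv
            _ ≤ Real.exp (t / 2) * (2 ^ m * m.factorial * Real.exp (t / 2)) :=
                mul_le_mul_of_nonneg_left hpf (Real.exp_pos _).le
            _ = 2 ^ m * m.factorial * (Real.exp (t / 2) * Real.exp (t / 2)) := by ring
            _ = 2 ^ m * m.factorial * Real.exp t := by
                rw [← Real.exp_add]; norm_num
        have hget : Real.exp t ≤ 3 * (Real.exp t - 1) := by
          have h1 : Real.exp 1 ≤ Real.exp t := Real.exp_le_exp.2 hts.le
          have h2 : (2 : ℝ) < Real.exp 1 := by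
            nlinarith [Real.exp_one_gt_d9]
          linarith
        calc u * v ≤ 2 ^ m * m.factorial * Real.exp t := huv2
          _ ≤ 2 ^ m * m.factorial * (3 * (Real.exp t - 1)) :=
              mul_le_mul_of_nonneg_left hget (by positivity)
          _ = C * (Real.exp t - 1) := by rw [hC]; ring
  have hkey := key |x| |θ * y| (abs_nonneg _) (abs_nonneg _)
  rw [div_mul_eq_mul_div, le_div_iff₀ hθ]
  calc |x * y| * θ = |x| * |θ * y| := by
        rw [abs_mul, abs_mul, abs_of_pos hθ]; ring
    _ ≤ _ := hkey
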